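/- Let γ : ℝ × ℝ → ℂ be smooth and let q : ℝ × ℝ → ℝ be smooth and positive with ∂_θ γ(θ,t) = q(θ,t)·exp(iθ) for all (θ,t). Define u := −(∂_θ q)/q, and suppose γ satisfies the flow ∂_t γ = −u·∂_θ γ − i·∂_θ γ. Then u satisfies the Burgers equation ∂_t u = ∂_θ(∂_θ u − u²). -/

import Mathlib

/-- Partial derivative in the first variable. -/
noncomputable def pderivFst {E : Type*} [NormedAddCommGroup E] [NormedSpace ℝ E]
    (f : ℝ × ℝ → E) (p : ℝ × ℝ) : E := deriv (fun x => f (x, p.2)) p.1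

/-- Partial derivative in the second variable. -/
noncomputable def pderivSnd {E : Type*} [NormedAddCommGroup E] [NormedSpace ℝ E]
    (f : ℝ × ℝ → E) (p : ℝ × ℝ) : E := deriv (fun y => f (p.1, y)) p.2

section helpers
variable {E : Type*} [NormedAddCommGroup E] [NormedSpace ℝ E]

lemma hasDerivAt_sliceFst {f : ℝ × ℝ → E} (hf : ContDiff ℝ (⊤ : ℕ∞) f) (p : ℝ × ℝ) :
    HasDerivAt (fun x => f (x, p.2)) (fderiv ℝ f p (1, 0)) p.1 := by
  have h1 : HasDerivAt (fun x : ℝ => (x, p.2)) ((1 : ℝ), (0 : ℝ)) p.1 :=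
    (hasDerivAt_id p.1).prodMk (hasDerivAt_const _ _)
  exact (hf.differentiable (by simp) p).hasFDerivAt.comp_hasDerivAt p.1 h1

lemma hasDerivAt_sliceSnd {f : ℝ × ℝ → E} (hf : ContDiff ℝ (⊤ : ℕ∞) f) (p : ℝ × ℝ) :
    HasDerivAt (fun y => f (p.1, y)) (fderiv ℝ f p (0, 1)) p.2 := by
  have h1 : HasDerivAt (fun y : ℝ => (p.1, y)) ((0 : ℝ), (1 : ℝ)) p.2 :=
    (hasDerivAt_const _ _).prodMk (hasDerivAt_id p.2)
  exact (hf.differentiable (by simp) p).hasFDerivAt.comp_hasDerivAt p.2 h1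

lemma pderivFst_eq {f : ℝ × ℝ → E} (hf : ContDiff ℝ (⊤ : ℕ∞) f) (p : ℝ × ℝ) :
    pderivFst f p = fderiv ℝ f p (1, 0) := (hasDerivAt_sliceFst hf p).deriv

lemma pderivSnd_eq {f : ℝ × ℝ → E} (hf : ContDiff ℝ (⊤ : ℕ∞) f) (p : ℝ × ℝ) :
    pderivSnd f p = fderiv ℝ f p (0, 1) := (hasDerivAt_sliceSnd hf p).deriv

lemma hasDerivAt_pderivFst {f : ℝ × ℝ → E} (hf : ContDiff ℝ (⊤ : ℕ∞) f) (p : ℝ × ℝ) :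
    HasDerivAt (fun x => f (x, p.2)) (pderivFst f p) p.1 := by
  rw [pderivFst_eq hf]; exact hasDerivAt_sliceFst hf p

lemma hasDerivAt_pderivSnd {f : ℝ × ℝ → E} (hf : ContDiff ℝ (⊤ : ℕ∞) f) (p : ℝ × ℝ) :
    HasDerivAt (fun y => f (p.1, y)) (pderivSnd f p) p.2 := by
  rw [pderivSnd_eq hf]; exact hasDerivAt_sliceSnd hf p

lemma contDiff_pderivFst {f : ℝ × ℝ → E} (hf : ContDiff ℝ (⊤ : ℕ∞) f) :
    ContDiff ℝ (⊤ : ℕ∞) (pderivFst f) := by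
  have h : pderivFst f = fun p => fderiv ℝ f p (1, 0) := funext fun p => pderivFst_eq hf p
  rw [h]
  exact (hf.fderiv_right (by simp)).clm_apply contDiff_const

lemma contDiff_pderivSnd {f : ℝ × ℝ → E} (hf : ContDiff ℝ (⊤ : ℕ∞) f) :
    ContDiff ℝ (⊤ : ℕ∞) (pderivSnd f) := by
  have h : pderivSnd f = fun p => fderiv ℝ f p (0, 1) := funext fun p => pderivSnd_eq hf p
  rw [h]
  exact (hf.fderiv_right (by simp)).clm_apply contDiff_const

lemma clairaut {f : ℝ × ℝ → E} (hf : ContDiff ℝ (⊤ : ℕ∞) f) (p : ℝ × ℝ) :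
    pderivFst (pderivSnd f) p = pderivSnd (pderivFst f) p := by
  have hg : ContDiff ℝ (⊤ : ℕ∞) (fderiv ℝ f) := hf.fderiv_right (by simp)
  have h1 : pderivFst (pderivSnd f) p = fderiv ℝ (fderiv ℝ f) p (1, 0) (0, 1) := by
    have hs : (fun x => pderivSnd f (x, p.2)) = fun x => fderiv ℝ f (x, p.2) (0, 1) :=
      funext fun x => pderivSnd_eq hf (x, p.2)
    have := (hasDerivAt_sliceFst hg p).clm_apply (hasDerivAt_const p.1 ((0:ℝ), (1:ℝ)))
    simp only [map_zero, add_zero] at this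
    rw [pderivFst, hs]
    exact this.deriv
  have h2 : pderivSnd (pderivFst f) p = fderiv ℝ (fderiv ℝ f) p (0, 1) (1, 0) := by
    have hs : (fun y => pderivFst f (p.1, y)) = fun y => fderiv ℝ f (p.1, y) (1, 0) :=
      funext fun y => pderivFst_eq hf (p.1, y)
    have := (hasDerivAt_sliceSnd hg p).clm_apply (hasDerivAt_const p.2 ((1:ℝ), (0:ℝ)))
    simp only [map_zero, add_zero] at this
    rw [pderivSnd, hs]
    exact this.deriv
  rw [h1, h2]
  exact second_derivative_symmetric (fun y => (hf.differentiable (by simp) y).hasFDerivAt)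
    (hg.differentiable (by simp) p).hasFDerivAt _ _

end helpers

/-- under the simplest isogonal Burgers flow
`∂_t γ = -u ∂_θ γ - i ∂_θ γ` of a curve parametrized by the turning angle
(`∂_θ γ = q exp(iθ)`, `q > 0`), the similarity curvature `u = -q_θ/q` evolves by the
Burgers equation `u_t = ∂_θ(u_θ - u²)`. -/


theorem burgers_flow_on_similarity_curves (γ : ℝ × ℝ → ℂ) (q : ℝ × ℝ → ℝ)
    (hγ : ContDiff ℝ (⊤ : ℕ∞) γ) (hq : ContDiff ℝ (⊤ : ℕ∞) q) (hqpos : ∀ p : ℝ × ℝ, 0 < q p)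
    (htangent : ∀ p : ℝ × ℝ,
      pderivFst γ p = (Complex.ofReal (q p)) * Complex.exp ((p.1 : ℂ) * Complex.I))
    (u : ℝ × ℝ → ℝ) (hu : u = fun p => -pderivFst q p / q p)
    (hflow : ∀ p : ℝ × ℝ,
      pderivSnd γ p
        = -(Complex.ofReal (u p)) * pderivFst γ p - Complex.I * pderivFst γ p) :
    ∀ p : ℝ × ℝ,
      pderivSnd u p = pderivFst (fun p' => pderivFst u p' - u p' ^ 2) p := by
  have qne : ∀ p : ℝ × ℝ, q p ≠ 0 := fun p => (hqpos p).ne'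
  have hu' : ContDiff ℝ (⊤ : ℕ∞) u := by
    rw [hu]; exact (contDiff_pderivFst hq).neg.div hq qne
  -- relation q_θ = -u q
  have hqθ : ∀ p : ℝ × ℝ, pderivFst q p = -(u p * q p) := by
    intro p
    rw [hu]
    field_simp [qne p]
  -- the key evolution of q in time, from Clairaut on γ
  have hqt : ∀ p : ℝ × ℝ,
      pderivSnd q p = -(pderivFst u p) * q p - u p * pderivFst q p + q p := by
    intro p
    set e : ℂ := Complex.exp ((p.1 : ℂ) * Complex.I) with he
    have hEx : HasDerivAt (fun x : ℝ => Complex.exp ((x : ℂ) * Complex.I)) (e * Complex.I) p.1 := by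
      have := (((hasDerivAt_id ((p.1 : ℝ) : ℂ)).mul_const Complex.I).cexp).comp_ofReal
      simpa using this
    have hUc : HasDerivAt (fun x => ((u (x, p.2) : ℝ) : ℂ)) ((pderivFst u p : ℝ) : ℂ) p.1 :=
      (hasDerivAt_pderivFst hu' p).ofReal_comp
    have hQc : HasDerivAt (fun x => ((q (x, p.2) : ℝ) : ℂ)) ((pderivFst q p : ℝ) : ℂ) p.1 :=
      (hasDerivAt_pderivFst hq p).ofReal_comp
    have hQE : HasDerivAt (fun x : ℝ => ((q (x, p.2) : ℝ) : ℂ) * Complex.exp ((x : ℂ) * Complex.I))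
        (((pderivFst q p : ℝ) : ℂ) * e + ((q p : ℝ) : ℂ) * (e * Complex.I)) p.1 := by
      have := hQc.mul hEx
      exact this
    have hA : pderivFst (pderivSnd γ) p =
        -((pderivFst u p : ℝ) : ℂ) * (((q p : ℝ) : ℂ) * e) +
          -((u p : ℝ) : ℂ) * (((pderivFst q p : ℝ) : ℂ) * e + ((q p : ℝ) : ℂ) * (e * Complex.I)) -
          Complex.I * (((pderivFst q p : ℝ) : ℂ) * e + ((q p : ℝ) : ℂ) * (e * Complex.I)) := by
      have hfun : (fun x => pderivSnd γ (x, p.2)) =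
          fun x => -((u (x, p.2) : ℝ) : ℂ) * (((q (x, p.2) : ℝ) : ℂ) * Complex.exp ((x : ℂ) * Complex.I))
            - Complex.I * (((q (x, p.2) : ℝ) : ℂ) * Complex.exp ((x : ℂ) * Complex.I)) := by
        funext x
        rw [hflow (x, p.2), htangent (x, p.2)]
      rw [pderivFst, hfun]
      have := ((hUc.neg.mul hQE).sub (hQE.const_mul Complex.I)).deriv
      exact this
    have hB : pderivSnd (pderivFst γ) p = ((pderivSnd q p : ℝ) : ℂ) * e := by
      have hfun : (fun y => pderivFst γ (p.1, y)) =
          fun y => ((q (p.1, y) : ℝ) : ℂ) * e := by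
        funext y
        rw [htangent (p.1, y)]
      rw [pderivSnd, hfun]
      exact (((hasDerivAt_pderivSnd hq p).ofReal_comp).mul_const e).deriv
    have hcl := clairaut hγ p
    rw [hA, hB] at hcl
    have hqθc : ((pderivFst q p : ℝ) : ℂ) = -(((u p : ℝ) : ℂ) * ((q p : ℝ) : ℂ)) := by
      rw [hqθ p]; push_cast; ring
    have hene : e ≠ 0 := Complex.exp_ne_zero _
    have key : ((pderivSnd q p : ℝ) : ℂ) =
        ((-(pderivFst u p) * q p - u p * pderivFst q p + q p : ℝ) : ℂ) := by
      apply mul_right_cancel₀ hene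
      push_cast
      linear_combination (-1 : ℂ) * hcl - Complex.I * e * hqθc - ((q p : ℝ) : ℂ) * e * Complex.I_sq
    exact_mod_cast key
  intro p
  -- names
  have hqθθ := hasDerivAt_pderivFst (contDiff_pderivFst hq) p
  have hqθt := hasDerivAt_pderivSnd (contDiff_pderivFst hq) p
  -- u_θ as quotient
  have huθ : pderivFst u p =
      (-(pderivFst (pderivFst q) p) * q p - -(pderivFst q p) * pderivFst q p) / q p ^ 2 := by
    have hfun : (fun x => u (x, p.2)) = fun x => -pderivFst q (x, p.2) / q (x, p.2) := by
      funext x; rw [hu]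
    rw [pderivFst, hfun]
    exact ((hqθθ.neg).div (hasDerivAt_pderivFst hq p) (qne p)).deriv
  -- u_t as quotient
  have hut : pderivSnd u p =
      (-(pderivSnd (pderivFst q) p) * q p - -(pderivFst q p) * pderivSnd q p) / q p ^ 2 := by
    have hfun : (fun y => u (p.1, y)) = fun y => -pderivFst q (p.1, y) / q (p.1, y) := by
      funext y; rw [hu]
    rw [pderivSnd, hfun]
    exact ((hqθt.neg).div (hasDerivAt_pderivSnd hq p) (qne p)).deriv
  -- q_θt from Clairaut and hqt
  have hq5 : pderivSnd (pderivFst q) p =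
      (-(pderivFst (pderivFst u) p) * q p + -(pderivFst u p) * pderivFst q p)
        - (pderivFst u p * pderivFst q p + u p * pderivFst (pderivFst q) p)
        + pderivFst q p := by
    rw [← clairaut hq p]
    have hfun : (fun x => pderivSnd q (x, p.2)) =
        fun x => -(pderivFst u (x, p.2)) * q (x, p.2) - u (x, p.2) * pderivFst q (x, p.2)
          + q (x, p.2) := by
      funext x; rw [hqt (x, p.2)]
    rw [pderivFst, hfun]
    exact ((((hasDerivAt_pderivFst (contDiff_pderivFst hu') p).neg.mul
      (hasDerivAt_pderivFst hq p)).sub ((hasDerivAt_pderivFst hu' p).mul hqθθ)).add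
      (hasDerivAt_pderivFst hq p)).deriv
  -- RHS of the goal
  have hrhs : pderivFst (fun p' => pderivFst u p' - u p' ^ 2) p =
      pderivFst (pderivFst u) p - 2 * u p ^ 1 * pderivFst u p := by
    rw [pderivFst]
    refine HasDerivAt.deriv ?_
    convert ((hasDerivAt_pderivFst (contDiff_pderivFst hu') p).sub
      ((hasDerivAt_pderivFst hu' p).pow 2)) using 1
    · funext x; simp
    · norm_num
  rw [hut, hrhs]
  -- clear denominators in huθ
  have huθ' : pderivFst u p * q p ^ 2 =
      -(pderivFst (pderivFst q) p) * q p + pderivFst q p ^ 2 := by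
    rw [huθ, div_mul_cancel₀ _ (pow_ne_zero 2 (qne p))]
    ring
  rw [div_eq_iff (pow_ne_zero 2 (qne p))]
  linear_combination (-(q p)) * hq5 + pderivFst q p * hqt p + u p * huθ'
    + pderivFst u p * q p * hqθ p
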